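/- The category of coalgebras for streams has a terminal object, namely (Stream, tail): for every relative comonad S over eq : Set → Setoid equipped with a tautological comodule morphism t : S → S, there exists a unique (up to pointwise bisimilarity) coalgebra morphism (S, t) → (Stream, tail). -/

import Mathlib

/-- A relation on streams is a bisimulation if related streams have equal heads and
related tails. -/
def IsBisim {A : Type} (R : Stream' A → Stream' A → Prop) : Prop :=
  ∀ s t, R s t → s.head = t.head ∧ R s.tail t.tail

/-- Bisimilarity of streams: the greatest bisimulation. -/
def Bisim {A : Type} (s t : Stream' A) : Prop :=
  ∃ R, IsBisim R ∧ R s t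

/-- A comonad relative to the functor `eq : Set → Setoid`, given concretely: a family
of setoids indexed by types, a counit and a cobind operation defined on setoid
morphisms, satisfying the relative comonad laws up to the setoid equalities. -/
structure RelComonadEq : Type 1 where
  T : Type → Type
  rel : ∀ {A : Type}, T A → T A → Prop
  rel_equiv : ∀ A : Type, Equivalence (@rel A)
  counit : ∀ {A : Type}, T A → A
  counit_rel : ∀ {A : Type} {x y : T A}, rel x y → counit x = counit y
  cobind : ∀ {A B : Type}, (T A → B) → T A → T B
  cobind_rel : ∀ {A B : Type} (f : T A → B), (∀ {x y : T A}, rel x y → f x = f y) →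
      ∀ {x y : T A}, rel x y → rel (cobind f x) (cobind f y)
  cobind_congr : ∀ {A B : Type} (f g : T A → B), (∀ x, f x = g x) →
      ∀ x, rel (cobind f x) (cobind g x)
  counit_cobind : ∀ {A B : Type} (f : T A → B), (∀ {x y : T A}, rel x y → f x = f y) →
      ∀ x, counit (cobind f x) = f x
  cobind_counit : ∀ {A : Type} (x : T A), rel (cobind counit x) x
  cobind_cobind : ∀ {A B C : Type} (f : T A → B) (g : T B → C),
      (∀ {x y : T A}, rel x y → f x = f y) → (∀ {x y : T B}, rel x y → g x = g y) →
      ∀ x, rel (cobind g (cobind f x)) (cobind (fun y => g (cobind f y)) x)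

/-- A morphism of tautological comodules over a relative comonad `S` (over `eq`):
a family of setoid endomorphisms commuting with the comodule operation `cobind`. -/
structure TautHom (S : RelComonadEq) : Type 1 where
  app : ∀ {A : Type}, S.T A → S.T A
  app_rel : ∀ {A : Type} {x y : S.T A}, S.rel x y → S.rel (app x) (app y)
  comm : ∀ {A B : Type} (f : S.T A → B), (∀ {x y : S.T A}, S.rel x y → f x = f y) →
      ∀ x : S.T A, S.rel (app (S.cobind f x)) (S.cobind f (app x))

/-- A morphism of stream coalgebras from `(S, t)` to `(Stream, tail)`: a morphism of
relative comonads over `eq` (with the comonad structure on streams given by `head`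
and `sredec`, and bisimilarity as setoid equality) making the comodule-morphism
square with `t` and `tail` commute. -/
structure StreamCoalgHom
    (sredec : ∀ {A B : Type}, (Stream' A → B) → Stream' A → Stream' B)
    (S : RelComonadEq) (t : TautHom S) : Type 1 where
  app : ∀ {A : Type}, S.T A → Stream' A
  app_rel : ∀ {A : Type} {x y : S.T A}, S.rel x y → Bisim (app x) (app y)
  counit_eq : ∀ {A : Type} (x : S.T A), S.counit x = (app x).head
  cobind_eq : ∀ {A B : Type} (f : Stream' A → B),
      (∀ {u v : Stream' A}, Bisim u v → f u = f v) →
      ∀ x : S.T A, Bisim (app (S.cobind (fun y => f (app y)) x)) (sredec f (app x))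
  coalg_square : ∀ {A : Type} (x : S.T A), Bisim (app (t.app x)) (app x).tail

/-!
On `Stream'` bisimilarity is equality, since `(Stream' A, head, tail)` is the final coalgebra
of `A × -`; so any two maps `X → Stream' A` that agree on heads and turn `tail` into the same
`step : X → X` are equal. A coalgebra morphism `(S, t) → (Stream, tail)` is such a map with
`step = t` and heads given by the counit, which gives uniqueness. For existence, send `x` to the
stream of counits of `t^[n] x`; that it commutes with `cobind` is again finality, because
`t` commutes with `cobind` and `sredec` with `tail`.
-/

theorem bisim_iff_eq {A : Type} {s u : Stream' A} : Bisim s u ↔ s = u := by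
  constructor
  · rintro ⟨R, hR, hsu⟩
    exact Stream'.eq_of_bisim R (fun _ _ h => hR _ _ h) hsu
  · rintro rfl
    exact ⟨Eq, by rintro s _ rfl; exact ⟨rfl, rfl⟩, rfl⟩

namespace Stream'

theorem eq_of_rel_of_tail_comm {X A : Type*} (R : X → X → Prop) (step : X → X)
    {φ ψ : X → Stream' A} (hstep : ∀ {x y}, R x y → R (step x) (step y))
    (hhead : ∀ {x y}, R x y → (φ x).head = (ψ y).head)
    (hφ : ∀ x, (φ x).tail = φ (step x)) (hψ : ∀ x, (ψ x).tail = ψ (step x))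
    {x y : X} (hxy : R x y) : φ x = ψ y :=
  eq_of_bisim (fun s u => ∃ x y, R x y ∧ s = φ x ∧ u = ψ y)
    (by
      rintro _ _ ⟨x, y, hxy, rfl, rfl⟩
      exact ⟨hhead hxy, step x, step y, hstep hxy, hφ x, hψ y⟩)
    ⟨x, y, hxy, rfl, rfl⟩

theorem eq_of_head_eq_of_tail_comm {X A : Type*} (step : X → X) {φ ψ : X → Stream' A}
    (hhead : ∀ x, (φ x).head = (ψ x).head)
    (hφ : ∀ x, (φ x).tail = φ (step x)) (hψ : ∀ x, (ψ x).tail = ψ (step x)) (x : X) :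
    φ x = ψ x :=
  eq_of_rel_of_tail_comm Eq step (congrArg step) (by rintro x _ rfl; exact hhead x) hφ hψ rfl

end Stream'

namespace TautHom

variable {S : RelComonadEq} (t : TautHom S) {A : Type}

def unfold : S.T A → Stream' A :=
  Stream'.corec S.counit t.app

theorem head_unfold (x : S.T A) : (t.unfold x).head = S.counit x :=
  rfl

theorem tail_unfold (x : S.T A) : (t.unfold x).tail = t.unfold (t.app x) := by
  rw [unfold, Stream'.corec_eq, Stream'.tail_cons]

theorem unfold_congr {x y : S.T A} (hxy : S.rel x y) : t.unfold x = t.unfold y :=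
  Stream'.eq_of_rel_of_tail_comm S.rel t.app t.app_rel
    (fun h => by rw [head_unfold, head_unfold, S.counit_rel h]) t.tail_unfold t.tail_unfold hxy

variable (sredec : ∀ {A B : Type}, (Stream' A → B) → Stream' A → Stream' B)
  (hhead : ∀ {A B : Type} (f : Stream' A → B) (s : Stream' A), (sredec f s).head = f s)
  (htail : ∀ {A B : Type} (f : Stream' A → B) (s : Stream' A),
    (sredec f s).tail = sredec f s.tail)

include hhead htail in
theorem unfold_cobind {B : Type} (f : Stream' A → B) (x : S.T A) :
    t.unfold (S.cobind (fun y => f (t.unfold y)) x) = sredec f (t.unfold x) := by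
  have hg : ∀ {x y : S.T A}, S.rel x y → f (t.unfold x) = f (t.unfold y) :=
    fun h => congrArg f (t.unfold_congr h)
  refine Stream'.eq_of_head_eq_of_tail_comm t.app
    (φ := fun x => t.unfold (S.cobind (fun y => f (t.unfold y)) x))
    (ψ := fun x => sredec f (t.unfold x)) (fun x => ?_) (fun x => ?_) (fun x => ?_) x
  · rw [head_unfold, S.counit_cobind _ hg, hhead]
  · rw [tail_unfold, t.unfold_congr (t.comm _ hg x)]
  · rw [htail, tail_unfold]

def toStreamCoalgHom : StreamCoalgHom @sredec S t where
  app := t.unfold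
  app_rel h := bisim_iff_eq.2 (t.unfold_congr h)
  counit_eq _ := rfl
  cobind_eq f _ x := bisim_iff_eq.2 (t.unfold_cobind @sredec hhead htail f x)
  coalg_square x := bisim_iff_eq.2 (t.tail_unfold x).symm

end TautHom

theorem StreamCoalgHom.app_eq
    {sredec : ∀ {A B : Type}, (Stream' A → B) → Stream' A → Stream' B}
    {S : RelComonadEq} {t : TautHom S} (τ τ' : StreamCoalgHom @sredec S t) {A : Type}
    (x : S.T A) : τ.app x = τ'.app x :=
  Stream'.eq_of_head_eq_of_tail_comm t.app
    (fun x => by rw [← τ.counit_eq, ← τ'.counit_eq])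
    (fun x => (bisim_iff_eq.1 (τ.coalg_square x)).symm)
    (fun x => (bisim_iff_eq.1 (τ'.coalg_square x)).symm) x

/-- the category of coalgebras for streams has a terminal object,
namely `(Stream, tail)`: for every relative comonad `S` over `eq : Set → Setoid`
equipped with a morphism `t` of tautological comodules over `S`, there is a coalgebra
morphism `(S, t) → (Stream, tail)`, and it is unique up to pointwise bisimilarity. -/
theorem stream_terminal
    (sredec : ∀ {A B : Type}, (Stream' A → B) → Stream' A → Stream' B)
    (hhead : ∀ {A B : Type} (f : Stream' A → B) (t : Stream' A),
      (sredec f t).head = f t)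
    (htail : ∀ {A B : Type} (f : Stream' A → B) (t : Stream' A),
      (sredec f t).tail = sredec f t.tail)
    (S : RelComonadEq) (t : TautHom S) :
    Nonempty (StreamCoalgHom @sredec S t) ∧
    ∀ (τ τ' : StreamCoalgHom @sredec S t) (A : Type) (x : S.T A),
      Bisim (τ.app x) (τ'.app x) :=
  ⟨⟨t.toStreamCoalgHom @sredec hhead htail⟩,
    fun τ τ' _ x => bisim_iff_eq.2 (τ.app_eq τ' x)⟩
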